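/- arXiv:2102.05782 — 8 statements merged into one kernel-verified Lean document; each statement's English description precedes it below -/
import Mathlib

section
/- For a monotone submodular function f on a finite ground set V (with f(∅) ≥ 0), if X is a set, O is a set of cardinality k ≥ 1, and x is an element maximizing the marginal gain f(X ∪ {x}) - f(X) over all elements of O, then f(X ∪ {x}) - f(X) ≥ (f(O) - f(X))/k. -/
def Submodular {V : Type*} [DecidableEq V] (f : Finset V → ℝ) : Prop :=
  ∀ S T : Finset V, S ⊆ T → ∀ i ∉ T, f (insert i S) - f S ≥ f (insert i T) - f T

def MonotoneF {V : Type*} [DecidableEq V] (f : Finset V → ℝ) : Prop :=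
  ∀ S T : Finset V, S ⊆ T → f S ≤ f T

/-!
Submodularity bounds the gain of adding `O` to `X` by the sum of the marginal gains of the
elements of `O` at `X`; each of these is at most the gain of `x`, and monotonicity gives
`f O ≤ f (X ∪ O)`. Monotonicity also makes the gain of `x` nonnegative, so the bound also
holds at `k = 0`, where the division returns `0`.
-/

open Finset

theorem Submodular.union_sub_le_sum_insert_sub {V : Type*} [DecidableEq V] {f : Finset V → ℝ}
    (hsub : Submodular f) (X O : Finset V) :
    f (X ∪ O) - f X ≤ ∑ y ∈ O, (f (insert y X) - f X) := by
  induction O using Finset.induction_on with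
  | empty => simp
  | @insert a S haS ih =>
    rw [sum_insert haS, union_insert]
    by_cases haX : a ∈ X
    · rw [insert_eq_of_mem (mem_union_left S haX), insert_eq_of_mem haX]
      linarith
    · have hgain := hsub X (X ∪ S) subset_union_left a (by simp [haX, haS])
      linarith

theorem stmt0_general {V : Type*} [DecidableEq V] (f : Finset V → ℝ)
    (hsub : Submodular f) (hmono : MonotoneF f)
    (X O : Finset V) (k : ℕ) (hO : O.card = k)
    (x : V)
    (hmax : ∀ y ∈ O, f (insert y X) - f X ≤ f (insert x X) - f X) :
    f (insert x X) - f X ≥ (f O - f X) / k := by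
  have hgain_nonneg : 0 ≤ f (insert x X) - f X := sub_nonneg.2 (hmono _ _ (subset_insert x X))
  have hbound : f O - f X ≤ (f (insert x X) - f X) * k :=
    calc f O - f X ≤ f (X ∪ O) - f X := sub_le_sub_right (hmono O (X ∪ O) subset_union_right) _
      _ ≤ ∑ y ∈ O, (f (insert y X) - f X) := hsub.union_sub_le_sum_insert_sub X O
      _ ≤ ∑ _y ∈ O, (f (insert x X) - f X) := sum_le_sum hmax
      _ = (f (insert x X) - f X) * k := by rw [sum_const, hO, nsmul_eq_mul, mul_comm]
  exact div_le_of_le_mul₀ k.cast_nonneg hgain_nonneg hbound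

theorem stmt0 {V : Type*} [DecidableEq V] (f : Finset V → ℝ)
    (hsub : Submodular f) (hmono : MonotoneF f) (h0 : f ∅ ≥ 0)
    (X O : Finset V) (k : ℕ) (hk : 1 ≤ k) (hO : O.card = k)
    (x : V) (hx : x ∈ O)
    (hmax : ∀ y ∈ O, f (insert y X) - f X ≤ f (insert x X) - f X) :
    f (insert x X) - f X ≥ (f O - f X) / k :=
  stmt0_general f hsub hmono X O k hO x hmax
end

section
/- Let f be monotone submodular with f(∅) = 0, and suppose a sequence of sets X₀ = ∅ ⊆ X₁ ⊆ X₂ ⊆ ... satisfies f(Xᵢ) - f(Xᵢ₋₁) ≥ (1/k₂)·(f(O) - f(Xᵢ₋₁)) for all i, where f(O) ≥ 0. Then for integers 0 ≤ k ≤ k₁ ≤ k₂ with k₁ = θ·k₂ and k = η·k₁ (where θ ≥ 0 and 0 ≤ η ≤ 1), it holds that f(X_{k₁}) ≥ (1 - e^{θη - θ})·f(O) + e^{θη - θ}·f(X_k). -/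
/-!
Writing `g i = f O - f (X i)` for the gap to the benchmark, the greedy inequality says
`g i ≤ (1 - 1/k₂) g (i - 1)`, so `g k₁ ≤ (1 - 1/k₂)^(k₁ - k) g k ≤ e^{-(k₁ - k)/k₂} g k`
whenever `g k ≥ 0`, and `-(k₁ - k)/k₂ = θη - θ`. If instead `g k < 0`, the bound is a convex
combination below `f (X k) ≤ f (X k₁)`, by monotonicity along the chain.
-/

open Real

lemma one_sub_pow_le_exp_neg_mul {x : ℝ} (hx : x ≤ 1) (n : ℕ) :
    (1 - x) ^ n ≤ exp (-(n * x)) := by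
  calc (1 - x) ^ n ≤ exp (-x) ^ n :=
        pow_le_pow_left₀ (by linarith) (by linarith [add_one_le_exp (-x)]) n
    _ = exp (-(n * x)) := by rw [← exp_nat_mul, mul_neg]

lemma le_pow_sub_mul_of_le_mul {a : ℕ → ℝ} {q : ℝ} (hq : 0 ≤ q) {m n : ℕ} (hmn : m ≤ n)
    (h : ∀ i, m ≤ i → i < n → a (i + 1) ≤ q * a i) : a n ≤ q ^ (n - m) * a m := by
  induction n, hmn using Nat.le_induction with
  | base => simp
  | succ n hmn ih =>
    calc a (n + 1) ≤ q * a n := h n hmn n.lt_succ_self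
      _ ≤ q * (q ^ (n - m) * a m) :=
          mul_le_mul_of_nonneg_left (ih fun i hi hin => h i hi (by omega)) hq
      _ = q ^ (n + 1 - m) * a m := by rw [Nat.sub_add_comm hmn, pow_succ]; ring

section Greedy

variable {F : ℕ → ℝ} {v : ℝ} {k k₁ c : ℕ}

lemma greedy_gap_le_exp_mul (hk : k ≤ k₁)
    (hstep : ∀ i : ℕ, 1 ≤ i → i ≤ k₁ → F i - F (i - 1) ≥ (v - F (i - 1)) / c)
    (hgap : F k ≤ v) :
    v - F k₁ ≤ exp (((k : ℝ) - k₁) / c) * (v - F k) := by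
  have hc1 : (c : ℝ)⁻¹ ≤ 1 := Nat.cast_inv_le_one c
  have hrec : v - F k₁ ≤ (1 - (c : ℝ)⁻¹) ^ (k₁ - k) * (v - F k) := by
    refine le_pow_sub_mul_of_le_mul (a := fun i => v - F i) (by linarith) hk fun i _ hi => ?_
    have := hstep (i + 1) (by omega) hi
    simp only [Nat.add_sub_cancel] at this
    linarith [show (1 - (c : ℝ)⁻¹) * (v - F i) = (v - F i) - (v - F i) / c by ring]
  have hexp : ((k : ℝ) - k₁) / c = -(((k₁ - k : ℕ) : ℝ) * (c : ℝ)⁻¹) := by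
    rw [Nat.cast_sub hk]; ring
  rw [hexp]
  exact hrec.trans (mul_le_mul_of_nonneg_right (one_sub_pow_le_exp_neg_mul hc1 _) (by linarith))

lemma greedy_ge_convex_comb (hF : Monotone F) (hk : k ≤ k₁)
    (hstep : ∀ i : ℕ, 1 ≤ i → i ≤ k₁ → F i - F (i - 1) ≥ (v - F (i - 1)) / c) :
    F k₁ ≥ (1 - exp (((k : ℝ) - k₁) / c)) * v + exp (((k : ℝ) - k₁) / c) * F k := by
  rcases le_total (F k) v with hgap | hgap
  · linarith [greedy_gap_le_exp_mul hk hstep hgap]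
  · have hexp : exp (((k : ℝ) - k₁) / c) ≤ 1 := by
      rw [exp_le_one_iff]
      exact div_nonpos_of_nonpos_of_nonneg (by simpa using hk) (Nat.cast_nonneg c)
    nlinarith [hF hk]

end Greedy

theorem stmt3_general {V : Type*} [DecidableEq V] (f : Finset V → ℝ)
    (hmono : MonotoneF f)
    (O : Finset V)
    (X : ℕ → Finset V) (hchain : ∀ i : ℕ, X i ⊆ X (i + 1))
    (k k₁ k₂ : ℕ) (hk : k ≤ k₁) (hk2pos : 0 < k₂)
    (hstep : ∀ i : ℕ, 1 ≤ i → i ≤ k₁ →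
      f (X i) - f (X (i - 1)) ≥ (f O - f (X (i - 1))) / (k₂ : ℝ))
    (θ η : ℝ) (hθ : (k₁ : ℝ) = θ * k₂) (hη : (k : ℝ) = η * k₁) :
    f (X k₁) ≥ (1 - Real.exp (θ * η - θ)) * f O + Real.exp (θ * η - θ) * f (X k) := by
  have hfX : Monotone fun i => f (X i) :=
    fun a b hab => hmono _ _ (monotone_nat_of_le_succ hchain hab)
  have hexp : θ * η - θ = ((k : ℝ) - k₁) / k₂ := by
    rw [hη, hθ]
    field_simp
  rw [hexp]
  exact greedy_ge_convex_comb hfX hk hstep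

theorem stmt3 {V : Type*} [DecidableEq V] (f : Finset V → ℝ)
    (hsub : Submodular f) (hmono : MonotoneF f) (h0 : f ∅ = 0)
    (O : Finset V) (hO : f O ≥ 0)
    (X : ℕ → Finset V) (hX0 : X 0 = ∅) (hchain : ∀ i : ℕ, X i ⊆ X (i + 1))
    (k k₁ k₂ : ℕ) (hk : k ≤ k₁) (hk12 : k₁ ≤ k₂) (hk2pos : 0 < k₂)
    (hstep : ∀ i : ℕ, 1 ≤ i → i ≤ k₁ →
      f (X i) - f (X (i - 1)) ≥ (f O - f (X (i - 1))) / (k₂ : ℝ))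
    (θ η : ℝ) (hθ : (k₁ : ℝ) = θ * k₂) (hη : (k : ℝ) = η * k₁)
    (hθ0 : 0 ≤ θ) (hη0 : 0 ≤ η) (hη1 : η ≤ 1) :
    f (X k₁) ≥ (1 - Real.exp (θ * η - θ)) * f O + Real.exp (θ * η - θ) * f (X k) :=
  stmt3_general f hmono O X hchain k k₁ k₂ hk hk2pos hstep θ η hθ hη
end

section
/- If a sequence a₀ = 0, a₁, a₂, ... of reals satisfies aᵢ - aᵢ₋₁ ≥ (M - aᵢ₋₁)/k for all i ≥ 1 (with M ≥ 0 and integer k ≥ 1), then for all i, M - aᵢ ≤ (1 - 1/k)^i · M; in particular a_k ≥ (1 - (1-1/k)^k)·M ≥ (1 - 1/e)·M. -/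
/-!
Each step closes at least a `1/k` fraction of the remaining gap `M - aᵢ`, so the gap shrinks
geometrically with ratio `1 - 1/k`; the bound by `1/e` is `1 - x ≤ e^{-x}` raised to the `k`-th power.
-/

open Real

lemma sub_le_one_sub_one_div_mul_of_div_le_sub {M x y c : ℝ} (h : y - x ≥ (M - x) / c) :
    M - y ≤ (1 - 1 / c) * (M - x) := by
  have : (1 - 1 / c) * (M - x) = (M - x) - (M - x) / c := by ring
  linarith

lemma one_sub_one_div_pow_le_one_div_exp {k : ℕ} (hk : 1 ≤ k) :
    (1 - 1 / (k : ℝ)) ^ k ≤ 1 / exp 1 := by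
  simpa [exp_neg] using one_sub_div_pow_le_exp_neg (n := k) (t := 1) (by exact_mod_cast hk)

theorem stmt4 (M : ℝ) (hM : 0 ≤ M) (k : ℕ) (hk : 1 ≤ k)
    (a : ℕ → ℝ) (ha0 : a 0 = 0)
    (hstep : ∀ i : ℕ, 1 ≤ i → a i - a (i - 1) ≥ (M - a (i - 1)) / (k : ℝ)) :
    (∀ i : ℕ, M - a i ≤ (1 - 1 / (k : ℝ)) ^ i * M) ∧
    a k ≥ (1 - (1 - 1 / (k : ℝ)) ^ k) * M ∧
    a k ≥ (1 - 1 / Real.exp 1) * M := by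
  have gap (i : ℕ) : M - a i ≤ (1 - 1 / (k : ℝ)) ^ i * M := by
    simpa [ha0] using le_geom (u := fun i ↦ M - a i) (Nat.one_sub_one_div_cast_nonneg k) i
      fun j _ ↦ sub_le_one_sub_one_div_mul_of_div_le_sub (by simpa using hstep (j + 1) (by omega))
  refine ⟨gap, by linarith [gap k], ?_⟩
  calc (1 - 1 / exp 1) * M ≤ (1 - (1 - 1 / (k : ℝ)) ^ k) * M := by
        gcongr; exact one_sub_one_div_pow_le_one_div_exp hk
    _ ≤ a k := by linarith [gap k]
end

section
/- There exists a monotone submodular function f on the ground set {1,2,3,4} (namely f(∅)=0, f({1})=1, f({2})=f({3})=f({4})=1/2, f({1,j})=7/6 for j∈{2,3,4}, f({i,j})=1 for distinct i,j∈{2,3,4}, f({2,3,4})=3/2, f of any 3-set containing 1 equals 4/3, f({1,2,3,4})=3/2) such that, letting O_l denote a maximizer of f over sets of size l, f(O₃) - f(O₂) > f(O₂) - f(O₁). -/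
noncomputable def exampleFn (S : Finset (Fin 4)) : ℝ :=
  if 0 ∈ S then (S.card + 5) / 6 else S.card / 2

lemma exampleFn_of_mem {S : Finset (Fin 4)} (h : 0 ∈ S) : exampleFn S = (S.card + 5) / 6 :=
  if_pos h

lemma exampleFn_of_notMem {S : Finset (Fin 4)} (h : 0 ∉ S) : exampleFn S = S.card / 2 :=
  if_neg h

lemma exampleFn_insert_sub {S : Finset (Fin 4)} {i : Fin 4} (hi : i ∉ S) :
    exampleFn (insert i S) - exampleFn S =
      if 0 ∈ S then (1 / 6 : ℝ) else if i = 0 then 1 - S.card / 3 else 1 / 2 := by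
  have hcard : ((insert i S).card : ℝ) = S.card + 1 := by
    rw [Finset.card_insert_of_notMem hi]; push_cast; ring
  by_cases h0 : 0 ∈ S
  · rw [if_pos h0, exampleFn_of_mem (Finset.mem_insert_of_mem h0), exampleFn_of_mem h0, hcard]
    ring
  rw [if_neg h0, exampleFn_of_notMem h0]
  by_cases hi0 : i = 0
  · subst hi0
    rw [if_pos rfl, exampleFn_of_mem (Finset.mem_insert_self 0 S), hcard]
    ring
  · have h0' : 0 ∉ insert i S := by simp [h0, Ne.symm hi0]
    rw [if_neg hi0, exampleFn_of_notMem h0', hcard]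
    ring

lemma submodular_exampleFn : Submodular exampleFn := by
  intro S T hST i hiT
  have hiS : i ∉ S := fun h => hiT (hST h)
  rw [ge_iff_le, exampleFn_insert_sub hiT, exampleFn_insert_sub hiS]
  by_cases h0T : 0 ∈ T
  · have hi0 : i ≠ 0 := fun h => hiT (h ▸ h0T)
    split_ifs <;> norm_num
  · have h0S : 0 ∉ S := fun h => h0T (hST h)
    have hcard : (S.card : ℝ) ≤ T.card := by exact_mod_cast Finset.card_le_card hST
    split_ifs <;> linarith

lemma monotoneF_exampleFn : MonotoneF exampleFn := by
  intro S T hST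
  have hcard : S.card ≤ T.card := Finset.card_le_card hST
  by_cases h0S : 0 ∈ S
  · rw [exampleFn_of_mem h0S, exampleFn_of_mem (hST h0S)]
    gcongr
  by_cases h0T : 0 ∈ T
  · have hS : S.card < 4 := by simpa using Finset.card_lt_univ_of_notMem h0S
    have hST' : S.card ≤ T.card - 1 := by
      rw [← Finset.card_erase_of_mem h0T]
      exact Finset.card_le_card (Finset.subset_erase.2 ⟨hST, h0S⟩)
    have key : (3 * S.card : ℝ) ≤ T.card + 5 := by
      exact_mod_cast (by omega : 3 * S.card ≤ T.card + 5)
    rw [exampleFn_of_notMem h0S, exampleFn_of_mem h0T]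
    linarith
  · rw [exampleFn_of_notMem h0S, exampleFn_of_notMem h0T]
    gcongr

lemma exampleFn_le_of_card_eq_two {S : Finset (Fin 4)} (h : S.card = 2) :
    exampleFn S ≤ 7 / 6 := by
  unfold exampleFn
  split_ifs <;> rw [h] <;> norm_num

/-- Elements `0,1,2,3` of `Fin 4` play the roles of `1,2,3,4` in the paper. -/
theorem stmt8 :
    ∃ f : Finset (Fin 4) → ℝ,
      Submodular f ∧ MonotoneF f ∧
      f ∅ = 0 ∧ f {0} = 1 ∧
      (∀ j : Fin 4, j ≠ 0 → f {j} = 1 / 2) ∧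
      (∀ j : Fin 4, j ≠ 0 → f {0, j} = 7 / 6) ∧
      (∀ i j : Fin 4, i ≠ 0 → j ≠ 0 → i ≠ j → f {i, j} = 1) ∧
      f {1, 2, 3} = 3 / 2 ∧
      (∀ S : Finset (Fin 4), S.card = 3 → (0 : Fin 4) ∈ S → f S = 4 / 3) ∧
      f Finset.univ = 3 / 2 ∧
      (∀ O₁ O₂ O₃ : Finset (Fin 4),
        (O₁.card = 1 ∧ ∀ S : Finset (Fin 4), S.card ≤ 1 → f S ≤ f O₁) →
        (O₂.card = 2 ∧ ∀ S : Finset (Fin 4), S.card ≤ 2 → f S ≤ f O₂) →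
        (O₃.card = 3 ∧ ∀ S : Finset (Fin 4), S.card ≤ 3 → f S ≤ f O₃) →
        f O₃ - f O₂ > f O₂ - f O₁) := by
  have hsingle_zero : exampleFn {0} = 1 := by
    rw [exampleFn_of_mem (Finset.mem_singleton_self 0)]; norm_num
  have htriple : exampleFn {1, 2, 3} = 3 / 2 := by
    rw [exampleFn_of_notMem (by decide), show ({1, 2, 3} : Finset (Fin 4)).card = 3 from rfl]
    norm_num
  refine ⟨exampleFn, submodular_exampleFn, monotoneF_exampleFn, ?_, hsingle_zero, ?_, ?_, ?_,
    htriple, ?_, ?_, ?_⟩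
  · rw [exampleFn_of_notMem (Finset.notMem_empty 0)]; simp
  · intro j hj
    rw [exampleFn_of_notMem (by simpa [eq_comm] using hj)]; simp
  · intro j hj
    rw [exampleFn_of_mem (Finset.mem_insert_self 0 {j}), Finset.card_pair hj.symm]; norm_num
  · intro i j hi hj hij
    rw [exampleFn_of_notMem (by simp [hi.symm, hj.symm]), Finset.card_pair hij]; norm_num
  · intro S hS h0
    rw [exampleFn_of_mem h0, hS]; norm_num
  · rw [exampleFn_of_mem (Finset.mem_univ 0), Finset.card_univ, Fintype.card_fin]; norm_num
  · rintro O₁ O₂ O₃ ⟨-, hO₁⟩ ⟨hcard₂, -⟩ ⟨-, hO₃⟩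
    have h₁ := hsingle_zero ▸ hO₁ {0} (Finset.card_singleton 0).le
    have h₃ := htriple ▸ hO₃ {1, 2, 3} (by decide)
    linarith [exampleFn_le_of_card_eq_two hcard₂]
end

section
/- For a monotone submodular function f with f(∅) = 0 and integers 0 < a ≤ b, if O_b is an optimal set of cardinality b, then f(O_b) ≤ (b/a)·f(O_a), where O_a is an optimal set of cardinality a. -/
/-!
Submodularity says that the marginal values `f S - f (S \ {x})` of the elements of `S` sum to at
most `f S - f ∅`, so some element of `S` contributes at most `f S / #S`. Removing it shows that
`f S / #S` does not decrease when `S` shrinks by one element; descending from `Ob` to a set of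
size `a` gives `f Ob / b ≤ f Oa / a`.
-/

open Finset

namespace Submodular

variable {V : Type*} [DecidableEq V] {f : Finset V → ℝ}

theorem sum_sub_erase_le (hf : Submodular f) (S : Finset V) :
    ∑ x ∈ S, (f S - f (S.erase x)) ≤ f S - f ∅ := by
  induction S using Finset.induction_on with
  | empty => simp
  | insert y T hy ih =>
    have hmarg : ∀ x ∈ T, f (insert y T) - f ((insert y T).erase x) ≤ f T - f (T.erase x) := by
      intro x hx
      have := hf (T.erase x) ((insert y T).erase x) (erase_subset_erase x (subset_insert y T)) x
        (notMem_erase x _)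
      rw [insert_erase hx, insert_erase (mem_insert_of_mem hx)] at this
      linarith
    rw [sum_insert hy, erase_insert hy]
    linarith [sum_le_sum hmarg]

theorem exists_card_mul_sub_erase_le (hf : Submodular f) {S : Finset V} (hS : S.Nonempty) :
    ∃ x ∈ S, (#S : ℝ) * (f S - f (S.erase x)) ≤ f S - f ∅ := by
  obtain ⟨x, hxS, hbest⟩ := S.exists_max_image (fun y => f (S.erase y)) hS
  refine ⟨x, hxS, le_trans ?_ (hf.sum_sub_erase_le S)⟩
  rw [← nsmul_eq_mul]
  exact card_nsmul_le_sum S _ _ fun y hy => by linarith [hbest y hy]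

theorem mul_le_card_mul_of_forall_card_le (hf : Submodular f) (h0 : f ∅ = 0) {a : ℕ}
    (ha : 0 < a) {M : ℝ} (hM : ∀ S : Finset V, #S ≤ a → f S ≤ M) {S : Finset V}
    (haS : a ≤ #S) : a * f S ≤ #S * M := by
  obtain ⟨n, hn⟩ : ∃ n, #S = n := ⟨_, rfl⟩
  rw [hn] at haS ⊢
  induction n, haS using Nat.le_induction generalizing S with
  | base => exact mul_le_mul_of_nonneg_left (hM S hn.le) (Nat.cast_nonneg a)
  | succ n han ih =>
    obtain ⟨x, hxS, hx⟩ := hf.exists_card_mul_sub_erase_le (S := S) (card_pos.mp (by omega))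
    have herase : a * f (S.erase x) ≤ n * M := ih (by rw [card_erase_of_mem hxS]; omega)
    rw [hn, h0, sub_zero] at hx
    push_cast at hx
    have hdrop : (n : ℝ) * f S ≤ (n + 1) * f (S.erase x) := by linarith
    have hn0 : (0 : ℝ) < n := by exact_mod_cast ha.trans_le han
    refine le_of_mul_le_mul_left ?_ hn0
    calc (n : ℝ) * (a * f S) = a * (n * f S) := by ring
      _ ≤ a * ((n + 1) * f (S.erase x)) := by gcongr
      _ = (n + 1) * (a * f (S.erase x)) := by ring
      _ ≤ (n + 1) * (n * M) := by gcongr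
      _ = n * ((n + 1 : ℕ) * M) := by push_cast; ring

end Submodular

theorem stmt9_general {V : Type*} [DecidableEq V] (f : Finset V → ℝ)
    (hsub : Submodular f) (h0 : f ∅ = 0)
    (a b : ℕ) (ha : 0 < a) (hab : a ≤ b)
    (Oa Ob : Finset V)
    (hOaopt : ∀ S : Finset V, S.card ≤ a → f S ≤ f Oa)
    (hOb : Ob.card = b) :
    f Ob ≤ ((b : ℝ) / a) * f Oa := by
  have key := hsub.mul_le_card_mul_of_forall_card_le h0 ha hOaopt (hOb ▸ hab)
  rw [hOb] at key
  rw [div_mul_eq_mul_div, le_div_iff₀ (by exact_mod_cast ha)]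
  linarith

theorem stmt9 {V : Type*} [DecidableEq V] (f : Finset V → ℝ)
    (hsub : Submodular f) (hmono : MonotoneF f) (h0 : f ∅ = 0)
    (a b : ℕ) (ha : 0 < a) (hab : a ≤ b)
    (Oa Ob : Finset V)
    (hOa : Oa.card = a) (hOaopt : ∀ S : Finset V, S.card ≤ a → f S ≤ f Oa)
    (hOb : Ob.card = b) (hObopt : ∀ S : Finset V, S.card ≤ b → f S ≤ f Ob) :
    f Ob ≤ ((b : ℝ) / a) * f Oa :=
  stmt9_general f hsub h0 a b ha hab Oa Ob hOaopt hOb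
end

section
/- For q = 50 and e = exp(1), define h(a) = ((1 - e^{-(a+q)/(q+1)})·(e/q) + (1 - e^{-(a-1)/(q+1)})) / (e/q + (a-1)/q) for a ≥ 1. Then h(a) < 0.8512 for all a ≥ 1. -/
/-!
With t = a - 1 the two exponentials merge, because e · e^{-(a+q)/(q+1)} = e^{-t/(q+1)}, and
h(a) = (e + q - (q+1) e^{-t/(q+1)}) / (e + t). Hence h(a) < c reduces to
(q+1)(1 - e^{-s} - c s) < 1 - (1-c) e with s = t/(q+1). By convexity, 1 - e^{-s} - c s never
exceeds its value 1 - c + c log c at the critical point s = -log c, so it remains to check a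
numerical inequality, which for q = 50 and c = 0.8512 needs log 0.8512 to about five digits.
-/

open Real

noncomputable def greedySplitRatio (q a : ℝ) : ℝ :=
  ((1 - exp (-(a + q) / (q + 1))) * (exp 1 / q) + (1 - exp (-(a - 1) / (q + 1)))) /
    (exp 1 / q + (a - 1) / q)

lemma greedySplitRatio_eq {q : ℝ} (hq : 0 < q) (a : ℝ) :
    greedySplitRatio q a =
      (exp 1 + q - (q + 1) * exp (-(a - 1) / (q + 1))) / (exp 1 + (a - 1)) := by
  have hexp : exp 1 * exp (-(a + q) / (q + 1)) = exp (-(a - 1) / (q + 1)) := by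
    rw [← exp_add]
    congr 1
    field_simp
    ring
  have hnum : (1 - exp (-(a + q) / (q + 1))) * (exp 1 / q) + (1 - exp (-(a - 1) / (q + 1))) =
      (exp 1 + q - (q + 1) * exp (-(a - 1) / (q + 1))) / q := by
    generalize exp (-(a + q) / (q + 1)) = w at hexp ⊢
    generalize exp (-(a - 1) / (q + 1)) = v at hexp ⊢
    field_simp
    linear_combination -hexp
  rw [greedySplitRatio, hnum, ← add_div, div_div_div_cancel_right₀ hq.ne']

lemma one_sub_exp_neg_sub_mul_le {c : ℝ} (hc : 0 < c) (s : ℝ) :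
    1 - exp (-s) - c * s ≤ 1 - c + c * log c := by
  have htangent : c * (-s - log c + 1) ≤ exp (-s) :=
    calc c * (-s - log c + 1) ≤ c * exp (-s - log c) :=
          mul_le_mul_of_nonneg_left (add_one_le_exp _) hc.le
      _ = exp (-s) := by rw [exp_sub, exp_log hc]; field_simp
  linarith

lemma greedySplitRatio_lt {q c : ℝ} (hq : 0 < q) (hc : 0 < c)
    (hqc : (1 - c) * exp 1 + (q + 1) * (1 - c + c * log c) < 1) {a : ℝ} (ha : 1 ≤ a) :
    greedySplitRatio q a < c := by
  rw [greedySplitRatio_eq hq, div_lt_iff₀ (by linarith [exp_pos 1])]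
  have hmax := one_sub_exp_neg_sub_mul_le hc ((a - 1) / (q + 1))
  rw [← neg_div] at hmax
  have hscaled := mul_le_mul_of_nonneg_left hmax (by linarith : (0 : ℝ) ≤ q + 1)
  have hq1 : (q + 1) * ((a - 1) / (q + 1)) = a - 1 := by field_simp
  linear_combination hqc + hscaled + c * hq1

lemma log_0_8512_lt : log 0.8512 < -0.1611 := by
  rw [log_lt_iff_lt_exp (by norm_num)]
  have h := exp_bound (x := -0.1611) (by norm_num [abs_of_nonneg]) (n := 6) (by norm_num)
  rw [abs_le] at h
  simp only [Finset.sum_range_succ, Finset.sum_range_zero, Nat.factorial] at h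
  norm_num at h
  linarith [h.1]

theorem stmt16 (q e : ℝ) (hq : q = 50) (he : e = Real.exp 1)
    (h : ℝ → ℝ)
    (hh : h = fun a => ((1 - Real.exp (-(a + q) / (q + 1))) * (e / q) +
      (1 - Real.exp (-(a - 1) / (q + 1)))) / (e / q + (a - 1) / q)) :
    ∀ a : ℝ, 1 ≤ a → h a < 0.8512 := by
  subst hq he hh
  intro a ha
  exact greedySplitRatio_lt (by norm_num) (by norm_num)
    (by linarith [log_0_8512_lt, exp_one_lt_d9]) ha
end

section
/- Let 0 < ρ < 1 and ρ ≤ c ≤ 1 with (1 - ρ/c)/(1 - ρ) ≤ 1 - e^{-1}. If τ ∈ [0, 1] satisfies 1 - e^{-τ} ≤ (1 - ρ/c)/(1 - ρ), then (1 - e^{ρτ - ρ})/c + e^{ρτ - ρ}·(1 - ρ/c)/(1 - ρ) ≥ (1 - e^{-ρ}·((1-ρ)/(ρ(1/c - 1)))^ρ)/c + e^{-ρ}·((1-ρ)/(ρ(1/c - 1)))^ρ·(1 - ρ/c)/(1 - ρ). -/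
open Real

/-!
Both sides are values of the affine map `x ↦ (1 - x) / c + x D`, with `D = (1 - ρ/c)/(1 - ρ)`,
which is antitone because `D ≤ 1/c`. So it suffices that `e^{ρτ - ρ} ≤ e^{-ρ} M^ρ` with
`M = (1 - ρ)/(ρ(1/c - 1))`, i.e. `e^τ ≤ M`; and this is the hypothesis on `τ` rewritten through
the identity `1 - D = M⁻¹`.
-/

theorem antitone_one_sub_div_add_mul {c D : ℝ} (hD : D ≤ c⁻¹) :
    Antitone fun x : ℝ => (1 - x) / c + x * D := by
  intro x y hxy
  have key : (1 - x) / c + x * D - ((1 - y) / c + y * D) = (y - x) * (c⁻¹ - D) := by ring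
  linarith [mul_nonneg (sub_nonneg.mpr hxy) (sub_nonneg.mpr hD)]

theorem one_sub_div_div_one_sub_le_inv {ρ c : ℝ} (hρ : ρ < 1) (hc0 : 0 < c) (hc1 : c ≤ 1) :
    (1 - ρ / c) / (1 - ρ) ≤ c⁻¹ := by
  have hc : 1 ≤ c⁻¹ := (one_le_inv₀ hc0).mpr hc1
  rw [div_le_iff₀ (by linarith)]
  have : c⁻¹ * (1 - ρ) - (1 - ρ / c) = c⁻¹ - 1 := by ring
  linarith

theorem one_sub_div_div_one_sub_eq_inv {ρ c : ℝ} (hρ : ρ ≠ 1) :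
    1 - (1 - ρ / c) / (1 - ρ) = ((1 - ρ) / (ρ * (1 / c - 1)))⁻¹ := by
  have : 1 - ρ ≠ 0 := sub_ne_zero.mpr hρ.symm
  rw [inv_div]
  field_simp
  ring

theorem exp_le_of_one_sub_exp_neg_le {τ M : ℝ} (hM : 0 < M) (h : 1 - exp (-τ) ≤ 1 - M⁻¹) :
    exp τ ≤ M := by
  rw [← inv_le_inv₀ hM (exp_pos τ), ← exp_neg]
  linarith

theorem stmt18_general (ρ c : ℝ) (hρ0 : 0 < ρ) (hρ1 : ρ < 1) (hc1 : ρ ≤ c) (hc2 : c ≤ 1)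
    (τ : ℝ)
    (hτ : 1 - Real.exp (-τ) ≤ (1 - ρ / c) / (1 - ρ)) :
    (1 - Real.exp (ρ * τ - ρ)) / c + Real.exp (ρ * τ - ρ) * ((1 - ρ / c) / (1 - ρ)) ≥
      (1 - Real.exp (-ρ) * ((1 - ρ) / (ρ * (1 / c - 1))) ^ ρ) / c +
      Real.exp (-ρ) * ((1 - ρ) / (ρ * (1 / c - 1))) ^ ρ * ((1 - ρ / c) / (1 - ρ)) := by
  have hc0 : 0 < c := hρ0.trans_le hc1
  rcases hc2.lt_or_eq with hc | rfl
  swap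
  · -- at `c = 1` we have `D = 1`, and both sides equal `1`
    simp [zero_rpow hρ0.ne', div_self (sub_pos.mpr hρ1).ne']
  set M := (1 - ρ) / (ρ * (1 / c - 1))
  have hM : 0 < M := div_pos (by linarith) (mul_pos hρ0 (by rw [sub_pos, one_lt_div hc0]; exact hc))
  have hexp : exp τ ≤ M := exp_le_of_one_sub_exp_neg_le hM <| by
    rw [← one_sub_div_div_one_sub_eq_inv hρ1.ne]; linarith
  have hshift : exp (ρ * τ - ρ) ≤ exp (-ρ) * M ^ ρ := by
    rw [sub_eq_neg_add, exp_add, mul_comm ρ, exp_mul]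
    gcongr
  exact antitone_one_sub_div_add_mul (one_sub_div_div_one_sub_le_inv hρ1 hc0 hc.le) hshift

theorem stmt18 (ρ c : ℝ) (hρ0 : 0 < ρ) (hρ1 : ρ < 1) (hc1 : ρ ≤ c) (hc2 : c ≤ 1)
    (hcase : (1 - ρ / c) / (1 - ρ) ≤ 1 - Real.exp (-1))
    (τ : ℝ) (hτ0 : 0 ≤ τ) (hτ1 : τ ≤ 1)
    (hτ : 1 - Real.exp (-τ) ≤ (1 - ρ / c) / (1 - ρ)) :
    (1 - Real.exp (ρ * τ - ρ)) / c + Real.exp (ρ * τ - ρ) * ((1 - ρ / c) / (1 - ρ)) ≥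
      (1 - Real.exp (-ρ) * ((1 - ρ) / (ρ * (1 / c - 1))) ^ ρ) / c +
      Real.exp (-ρ) * ((1 - ρ) / (ρ * (1 / c - 1))) ^ ρ * ((1 - ρ / c) / (1 - ρ)) :=
  stmt18_general ρ c hρ0 hρ1 hc1 hc2 τ hτ
end

section
/- Let 0 < ρ₁ < ... < ρ_m (with ρ₀ = 0) and β₁, ..., β_m > 0 satisfy βᵢ/(ρᵢ - ρᵢ₋₁) ≥ βᵢ₊₁/(ρᵢ₊₁ - ρᵢ) for all i < m. Then for every budget fraction b with ρ_{i-1} ≤ b ≤ ρᵢ, the maximum of Σⱼ βⱼ min(xⱼ/(ρⱼ - ρⱼ₋₁), 1) over nonnegative x₁, ..., x_m with Σⱼ xⱼ = b equals Σ_{j<i} βⱼ + βᵢ·(b - ρ_{i-1})/(ρᵢ - ρᵢ₋₁). -/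
/-!
Linear programming duality. Let `c = βᵢ / (ρᵢ - ρᵢ₋₁)` be the per-unit value of the slot that the
budget `b` ends in. Slot by slot, `βⱼ min (xⱼ / δⱼ, 1) ≤ c xⱼ + (βⱼ - c δⱼ)⁺` with `δⱼ = ρⱼ - ρⱼ₋₁`,
so every feasible value is at most `c b + Σⱼ (βⱼ - c δⱼ)⁺`. Since the per-unit values are
non-increasing, the positive parts are exactly the slots `j < i`, and this bound telescopes to the
claimed value. The greedy allocation, which fills slots `1, …, i - 1` completely and slot `i` with
the remaining `b - ρᵢ₋₁`, attains the bound with equality in every slot.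
-/

open Finset

lemma sum_Icc_one_sub_pred (f : ℕ → ℝ) (k : ℕ) :
    ∑ j ∈ Icc 1 k, (f j - f (j - 1)) = f k - f 0 := by
  induction k with
  | zero => simp
  | succ k ih =>
    rw [sum_Icc_succ_top (by omega), ih, Nat.add_sub_cancel]
    ring

lemma mul_min_div_one_le {β c x δ : ℝ} (hc : 0 ≤ c) (hx : 0 ≤ x) (hδ : 0 < δ) :
    β * min (x / δ) 1 ≤ c * x + max (β - c * δ) 0 := by
  have hcx : c * x = c * δ * (x / δ) := by field_simp
  have ht : 0 ≤ x / δ := div_nonneg hx hδ.le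
  have hle_max := le_max_left (β - c * δ) 0
  have hmax_nonneg := le_max_right (β - c * δ) 0
  rw [hcx]
  rcases le_total (x / δ) 1 with h | h
  · rw [min_eq_left h]
    nlinarith
  · rw [min_eq_right h]
    nlinarith [mul_nonneg hc hδ.le]

/-- The equality cases of `mul_min_div_one_le` (complementary slackness). -/
lemma mul_min_div_one_eq {β c x δ : ℝ} (hδ : 0 < δ)
    (h : (x = δ ∧ c * δ ≤ β) ∨ (0 ≤ x ∧ x ≤ δ ∧ β = c * δ) ∨ (x = 0 ∧ β ≤ c * δ)) :
    β * min (x / δ) 1 = c * x + max (β - c * δ) 0 := by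
  rcases h with ⟨rfl, h⟩ | ⟨hx, hxδ, rfl⟩ | ⟨rfl, h⟩
  · rw [div_self hδ.ne', min_self, max_eq_left (by linarith)]
    ring
  · rw [min_eq_left ((div_le_one hδ).2 hxδ), sub_self, max_self, add_zero]
    field_simp
  · rw [zero_div, min_eq_left zero_le_one, max_eq_right (by linarith)]
    ring

lemma sum_mul_min_div_one_le {ι : Type*} {s : Finset ι} {β x δ : ι → ℝ} {c : ℝ} (hc : 0 ≤ c)
    (hx : ∀ j ∈ s, 0 ≤ x j) (hδ : ∀ j ∈ s, 0 < δ j) :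
    ∑ j ∈ s, β j * min (x j / δ j) 1 ≤ c * ∑ j ∈ s, x j + ∑ j ∈ s, max (β j - c * δ j) 0 := by
  rw [mul_sum, ← sum_add_distrib]
  exact sum_le_sum fun j hj => mul_min_div_one_le hc (hx j hj) (hδ j hj)

section Slots

variable {m i : ℕ} {ρ β : ℕ → ℝ} {c : ℝ}

lemma sub_pred_pos_of_strictMonoOn (hρ : StrictMonoOn ρ (Set.Iic m)) {j : ℕ} (hj : 1 ≤ j)
    (hjm : j ≤ m) : 0 < ρ j - ρ (j - 1) :=
  sub_pos.2 <| hρ (by simp; omega) (by simpa using hjm) (by omega)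

/-- The greedy allocation to slot `j`: the length of `[0, b] ∩ [ρⱼ₋₁, ρⱼ]` when `0 ≤ ρⱼ₋₁ ≤ ρⱼ`. -/
def greedyFill (b : ℝ) (ρ : ℕ → ℝ) (j : ℕ) : ℝ :=
  max (min b (ρ j) - ρ (j - 1)) 0

lemma greedyFill_eq_sub_min {b : ℝ} {j : ℕ} (h : ρ (j - 1) ≤ ρ j) :
    greedyFill b ρ j = min b (ρ j) - min b (ρ (j - 1)) := by
  unfold greedyFill
  rcases le_total b (ρ (j - 1)) with hb | hb
  · rw [min_eq_left (hb.trans h), min_eq_left hb, sub_self]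
    exact max_eq_right (by linarith)
  · rw [min_eq_right hb]
    exact max_eq_left (by simpa using le_min hb h)

lemma sum_greedyFill (hρ : StrictMonoOn ρ (Set.Iic m)) (hρ0 : ρ 0 = 0) {b : ℝ} (hb0 : 0 ≤ b)
    (hbm : b ≤ ρ m) : ∑ j ∈ Icc 1 m, greedyFill b ρ j = b := by
  rw [sum_congr rfl fun j hj => greedyFill_eq_sub_min
      (sub_pos.1 (sub_pred_pos_of_strictMonoOn hρ (mem_Icc.1 hj).1 (mem_Icc.1 hj).2)).le,
    sum_Icc_one_sub_pred (fun j => min b (ρ j)), min_eq_left hbm, hρ0, min_eq_right hb0, sub_zero]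

lemma mul_min_greedyFill_eq (hρ : StrictMonoOn ρ (Set.Iic m))
    (above : ∀ j, 1 ≤ j → j ≤ i → c * (ρ j - ρ (j - 1)) ≤ β j)
    (below : ∀ j, i ≤ j → j ≤ m → β j ≤ c * (ρ j - ρ (j - 1)))
    (him : i ≤ m) {b : ℝ} (hb1 : ρ (i - 1) ≤ b) (hb2 : b ≤ ρ i)
    {j : ℕ} (hj1 : 1 ≤ j) (hjm : j ≤ m) :
    β j * min (greedyFill b ρ j / (ρ j - ρ (j - 1))) 1
      = c * greedyFill b ρ j + max (β j - c * (ρ j - ρ (j - 1))) 0 := by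
  have hρle : ∀ k l, k ≤ l → l ≤ m → ρ k ≤ ρ l := fun k l hkl hl =>
    hρ.monotoneOn (by simp; omega) (by simpa using hl) hkl
  apply mul_min_div_one_eq (sub_pred_pos_of_strictMonoOn hρ hj1 hjm)
  unfold greedyFill
  rcases lt_trichotomy j i with hji | rfl | hij
  · have hjb : ρ j ≤ b := (hρle j (i - 1) (by omega) (by omega)).trans hb1
    refine Or.inl ⟨?_, above j hj1 hji.le⟩
    rw [min_eq_right hjb]
    exact max_eq_left (sub_pred_pos_of_strictMonoOn hρ hj1 hjm).le
  · refine Or.inr (Or.inl ⟨le_max_right _ _, ?_,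
      le_antisymm (below j le_rfl hjm) (above j hj1 le_rfl)⟩)
    rw [min_eq_left hb2, max_eq_left (by linarith)]
    linarith
  · refine Or.inr (Or.inr ⟨?_, below j hij.le hjm⟩)
    have hbj : b ≤ ρ (j - 1) := hb2.trans (hρle i (j - 1) (by omega) (by omega))
    rw [min_eq_left (hb2.trans (hρle i j hij.le hjm))]
    exact max_eq_right (sub_nonpos.2 hbj)

lemma sum_max_sub_mul_sub_pred
    (above : ∀ j, 1 ≤ j → j ≤ i → c * (ρ j - ρ (j - 1)) ≤ β j)
    (below : ∀ j, i ≤ j → j ≤ m → β j ≤ c * (ρ j - ρ (j - 1))) (him : i ≤ m) :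
    ∑ j ∈ Icc 1 m, max (β j - c * (ρ j - ρ (j - 1))) 0
      = ∑ j ∈ Icc 1 (i - 1), β j - c * (ρ (i - 1) - ρ 0) := by
  have hsub : Icc 1 (i - 1) ⊆ Icc 1 m := Icc_subset_Icc_right (by omega)
  rw [← sum_subset hsub fun j hj hji => ?_, ← sum_Icc_one_sub_pred ρ, mul_sum, ← sum_sub_distrib]
  · refine sum_congr rfl fun j hj => max_eq_left ?_
    obtain ⟨hj1, hji⟩ := mem_Icc.1 hj
    linarith [above j hj1 (by omega)]
  · obtain ⟨hj1, hjm⟩ := mem_Icc.1 hj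
    have hij : i ≤ j := by simp only [mem_Icc, not_and, not_le] at hji; omega
    exact max_eq_right (by linarith [below j hij hjm])

end Slots

theorem stmt19_general (m : ℕ) (ρ : ℕ → ℝ) (hρ0 : ρ 0 = 0)
    (hρmono : ∀ i : ℕ, i < m → ρ i < ρ (i + 1))
    (β : ℕ → ℝ) (hβpos : ∀ j : ℕ, 1 ≤ j → j ≤ m → 0 < β j)
    (hβdec : ∀ j : ℕ, 1 ≤ j → j < m →
      β j / (ρ j - ρ (j - 1)) ≥ β (j + 1) / (ρ (j + 1) - ρ j))
    (i : ℕ) (hi1 : 1 ≤ i) (him : i ≤ m)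
    (b : ℝ) (hb1 : ρ (i - 1) ≤ b) (hb2 : b ≤ ρ i) :
    IsGreatest
      {v : ℝ | ∃ x : ℕ → ℝ, (∀ j, 0 ≤ x j) ∧ (∑ j ∈ Finset.Icc 1 m, x j = b) ∧
        v = ∑ j ∈ Finset.Icc 1 m, β j * min (x j / (ρ j - ρ (j - 1))) 1}
      (∑ j ∈ Finset.Icc 1 (i - 1), β j + β i * (b - ρ (i - 1)) / (ρ i - ρ (i - 1))) := by
  have hρ : StrictMonoOn ρ (Set.Iic m) :=
    strictMonoOn_of_lt_add_one Set.ordConnected_Iic fun a _ _ ha => hρmono a (by simpa using ha)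
  have hgap : ∀ {j}, 1 ≤ j → j ≤ m → 0 < ρ j - ρ (j - 1) := sub_pred_pos_of_strictMonoOn hρ
  have hr : AntitoneOn (fun j => β j / (ρ j - ρ (j - 1))) (Set.Icc 1 m) :=
    antitoneOn_of_add_one_le Set.ordConnected_Icc fun a _ ha ha' =>
      by simpa using hβdec a ha.1 (by simpa using ha'.2)
  set c := β i / (ρ i - ρ (i - 1))
  have hc : 0 ≤ c := (div_pos (hβpos i hi1 him) (hgap hi1 him)).le
  have above : ∀ j, 1 ≤ j → j ≤ i → c * (ρ j - ρ (j - 1)) ≤ β j := fun j hj1 hji =>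
    (le_div_iff₀ (hgap hj1 (by omega))).1 (hr ⟨hj1, by omega⟩ ⟨hi1, him⟩ hji)
  have below : ∀ j, i ≤ j → j ≤ m → β j ≤ c * (ρ j - ρ (j - 1)) := fun j hij hjm =>
    (div_le_iff₀ (hgap (by omega) hjm)).1 (hr ⟨hi1, him⟩ ⟨by omega, hjm⟩ hij)
  have hvalue : ∑ j ∈ Icc 1 (i - 1), β j + β i * (b - ρ (i - 1)) / (ρ i - ρ (i - 1))
      = c * b + ∑ j ∈ Icc 1 m, max (β j - c * (ρ j - ρ (j - 1))) 0 := by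
    rw [sum_max_sub_mul_sub_pred above below him, hρ0]
    ring
  have hb0 : 0 ≤ b := hρ0 ▸ (hρ.monotoneOn (by simp) (by simp; omega) (Nat.zero_le _)).trans hb1
  rw [hvalue]
  have hbm : b ≤ ρ m := hb2.trans (hρ.monotoneOn (by simpa using him) (by simp) him)
  have hsum := sum_greedyFill hρ hρ0 hb0 hbm
  refine ⟨⟨greedyFill b ρ, fun j => le_max_right _ _, hsum, ?_⟩, ?_⟩
  · rw [sum_congr rfl fun j hj => mul_min_greedyFill_eq hρ above below him hb1 hb2
      (mem_Icc.1 hj).1 (mem_Icc.1 hj).2, sum_add_distrib, ← mul_sum, hsum]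
  · rintro v ⟨x, hx0, hxs, rfl⟩
    rw [← hxs]
    exact sum_mul_min_div_one_le hc (fun j _ => hx0 j)
      fun j hj => hgap (mem_Icc.1 hj).1 (mem_Icc.1 hj).2

theorem stmt19 (m : ℕ) (hm : 1 ≤ m) (ρ : ℕ → ℝ) (hρ0 : ρ 0 = 0)
    (hρmono : ∀ i : ℕ, i < m → ρ i < ρ (i + 1))
    (β : ℕ → ℝ) (hβpos : ∀ j : ℕ, 1 ≤ j → j ≤ m → 0 < β j)
    (hβdec : ∀ j : ℕ, 1 ≤ j → j < m →
      β j / (ρ j - ρ (j - 1)) ≥ β (j + 1) / (ρ (j + 1) - ρ j))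
    (i : ℕ) (hi1 : 1 ≤ i) (him : i ≤ m)
    (b : ℝ) (hb1 : ρ (i - 1) ≤ b) (hb2 : b ≤ ρ i) :
    IsGreatest
      {v : ℝ | ∃ x : ℕ → ℝ, (∀ j, 0 ≤ x j) ∧ (∑ j ∈ Finset.Icc 1 m, x j = b) ∧
        v = ∑ j ∈ Finset.Icc 1 m, β j * min (x j / (ρ j - ρ (j - 1))) 1}
      (∑ j ∈ Finset.Icc 1 (i - 1), β j + β i * (b - ρ (i - 1)) / (ρ i - ρ (i - 1))) :=
  stmt19_general m ρ hρ0 hρmono β hβpos hβdec i hi1 him b hb1 hb2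
end
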